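/- If there is a constant c > 1 such that β_f e^{−α_{k|f}} ≥ c β_h e^{−α_{k|h}} for all k ≥ K (i.e., the likelihood ratio exceeds c), and p_{K|f} > 0, then under the MMKF update p_{k|f} → 1 and p_{k|h} → 0 as k → ∞. -/
import Mathlib


open Filter

/-- If from some time `K` on the faulty likelihood dominates the
fault-free one by a factor `c > 1`, and `p_{K|f} > 0`, then under the MMKF update
`p_{k|f} → 1` and `p_{k|h} → 0`. -/
theorem mmkf_posterior_convergence
    (pf ph αf αh : ℕ → ℝ) (βh βf : ℝ)
    (hβh : 0 < βh) (hβf : 0 < βf)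
    (hnn_f : ∀ k, 0 ≤ pf k) (hnn_h : ∀ k, 0 ≤ ph k)
    (hsum : ∀ k, pf k + ph k = 1)
    (hupd_f : ∀ k, pf (k + 1) =
      (βf * Real.exp (-(αf k)) * pf k) /
        (pf k * (βf * Real.exp (-(αf k))) + ph k * (βh * Real.exp (-(αh k)))))
    (hupd_h : ∀ k, ph (k + 1) =
      (βh * Real.exp (-(αh k)) * ph k) /
        (pf k * (βf * Real.exp (-(αf k))) + ph k * (βh * Real.exp (-(αh k)))))
    (c : ℝ) (hc : 1 < c) (K : ℕ)
    (hdom : ∀ k, K ≤ k → c * (βh * Real.exp (-(αh k))) ≤ βf * Real.exp (-(αf k)))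
    (hK : 0 < pf K) :
    Tendsto pf atTop (nhds 1) ∧ Tendsto ph atTop (nhds 0) := by
  set Lf : ℕ → ℝ := fun k => βf * Real.exp (-(αf k)) with hLf
  set Lh : ℕ → ℝ := fun k => βh * Real.exp (-(αh k)) with hLh
  have hLfpos : ∀ k, 0 < Lf k := fun k => mul_pos hβf (Real.exp_pos _)
  have hLhpos : ∀ k, 0 < Lh k := fun k => mul_pos hβh (Real.exp_pos _)
  have hc0 : 0 < c := lt_trans one_pos hc
  -- positivity of pf from K on
  have hpos : ∀ n, 0 < pf (K + n) := by
    intro n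
    induction n with
    | zero => simpa using hK
    | succ n ih =>
      have hD : 0 < pf (K + n) * Lf (K + n) + ph (K + n) * Lh (K + n) := by
        have h1 : 0 < pf (K + n) * Lf (K + n) := mul_pos ih (hLfpos _)
        have h2 : 0 ≤ ph (K + n) * Lh (K + n) :=
          mul_nonneg (hnn_h _) (hLhpos _).le
        linarith
      have := hupd_f (K + n)
      rw [show K + (n + 1) = (K + n) + 1 from rfl, this]
      exact div_pos (mul_pos (hLfpos _) ih) hD
  -- ratio bound
  have hratio : ∀ n, ph (K + n) / pf (K + n) ≤ (ph K / pf K) * (1 / c) ^ n := by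
    intro n
    induction n with
    | zero => simp
    | succ n ih =>
      have hD : 0 < pf (K + n) * Lf (K + n) + ph (K + n) * Lh (K + n) := by
        have h1 : 0 < pf (K + n) * Lf (K + n) := mul_pos (hpos n) (hLfpos _)
        have h2 : 0 ≤ ph (K + n) * Lh (K + n) :=
          mul_nonneg (hnn_h _) (hLhpos _).le
        linarith
      have hDne : pf (K + n) * (βf * Real.exp (-(αf (K + n)))) +
          ph (K + n) * (βh * Real.exp (-(αh (K + n)))) ≠ 0 := by
        have := hD; simp only [hLf, hLh] at this; exact ne_of_gt this
      have hstep : ph (K + (n + 1)) / pf (K + (n + 1)) =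
          (Lh (K + n) * ph (K + n)) / (Lf (K + n) * pf (K + n)) := by
        rw [show K + (n + 1) = (K + n) + 1 from rfl, hupd_f (K + n), hupd_h (K + n)]
        simp only [hLf, hLh]
        rw [div_div_div_cancel_right₀]; exact hDne
      rw [hstep]
      have hLle : Lh (K + n) * c ≤ Lf (K + n) := by
        have := hdom (K + n) (Nat.le_add_right _ _)
        simp only [hLf, hLh]; linarith
      have key : (Lh (K + n) * ph (K + n)) / (Lf (K + n) * pf (K + n)) ≤
          (1 / c) * (ph (K + n) / pf (K + n)) := by
        rw [div_mul_eq_mul_div, one_mul, div_div]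
        rw [div_le_div_iff₀ (mul_pos (hLfpos _) (hpos n)) (mul_pos (hpos n) hc0)]
        nlinarith [mul_nonneg (mul_nonneg (sub_nonneg.2 hLle) (hnn_h (K + n))) (hpos n).le]
      calc (Lh (K + n) * ph (K + n)) / (Lf (K + n) * pf (K + n))
          ≤ (1 / c) * (ph (K + n) / pf (K + n)) := key
        _ ≤ (1 / c) * ((ph K / pf K) * (1 / c) ^ n) := by
            apply mul_le_mul_of_nonneg_left ih
            positivity
        _ = (ph K / pf K) * (1 / c) ^ (n + 1) := by ring
  -- ph (K+n) ≤ ratio bound since pf ≤ 1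
  have hpf_le1 : ∀ k, pf k ≤ 1 := fun k => by linarith [hsum k, hnn_h k]
  have hbound : ∀ n, ph (K + n) ≤ (ph K / pf K) * (1 / c) ^ n := by
    intro n
    have h1 : ph (K + n) / pf (K + n) ≤ (ph K / pf K) * (1 / c) ^ n := hratio n
    have h2 : ph (K + n) ≤ ph (K + n) / pf (K + n) := by
      rw [le_div_iff₀ (hpos n)]
      nlinarith [hnn_h (K + n), hpf_le1 (K + n), hpos n]
    linarith
  -- shifted ph tends to 0
  have hgeo : Tendsto (fun n : ℕ => (ph K / pf K) * (1 / c) ^ n) atTop (nhds 0) := by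
    have : Tendsto (fun n : ℕ => (1 / c) ^ n) atTop (nhds 0) := by
      apply tendsto_pow_atTop_nhds_zero_of_lt_one
      · positivity
      · rw [div_lt_one hc0]; exact hc
    simpa using this.const_mul (ph K / pf K)
  have hshift : Tendsto (fun n : ℕ => ph (K + n)) atTop (nhds 0) := by
    apply squeeze_zero (fun n => hnn_h (K + n)) hbound hgeo
  have hph : Tendsto ph atTop (nhds 0) := by
    have := (tendsto_add_atTop_iff_nat K).mp (by
      simpa [add_comm] using hshift : Tendsto (fun n => ph (n + K)) atTop (nhds 0))
    exact this
  refine ⟨?_, hph⟩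
  have : Tendsto (fun k => 1 - ph k) atTop (nhds (1 - 0)) := tendsto_const_nhds.sub hph
  simp only [sub_zero] at this
  convert this using 1
  funext k
  linarith [hsum k]
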